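/- Let E and F be real normed vector spaces, let z₀ ∈ E, and let φ, ψ : E → F be Fréchet differentiable at z₀ with φ(z₀) = ψ(z₀). Suppose there exist c ≥ 0 and a neighborhood U of z₀ such that ‖φ(z) − ψ(z)‖ ≤ c · ‖ψ(z) − ψ(z₀)‖ for all z ∈ U. Then the Fréchet derivatives at z₀ satisfy ‖Dφ(z₀) v − Dψ(z₀) v‖ ≤ c · ‖Dψ(z₀) v‖ for every v ∈ E; in particular the operator norm satisfies ‖Dφ(z₀) − Dψ(z₀)‖ ≤ c · ‖Dψ(z₀)‖. -/

import Mathlib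

/-!
Along each line `t ↦ z₀ + t • v`, the difference quotients of `φ - ψ` and of `ψ` at `t = 0`
satisfy the assumed bound and converge to `(φ' - ψ') v` and `ψ' v`; the bound passes to the
limit, and then to operator norms.
-/

open Filter Topology

section

variable {𝕜 : Type*} [NontriviallyNormedField 𝕜]
  {E F G : Type*} [NormedAddCommGroup E] [NormedSpace 𝕜 E]
  [NormedAddCommGroup F] [NormedSpace 𝕜 F] [NormedAddCommGroup G] [NormedSpace 𝕜 G]

theorem HasDerivAt.norm_le_mul_norm_of_eventually_norm_sub_le {f : 𝕜 → F} {g : 𝕜 → G}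
    {f' : F} {g' : G} {x : 𝕜} {c : ℝ} (hf : HasDerivAt f f' x) (hg : HasDerivAt g g' x)
    (hbound : ∀ᶠ t in 𝓝 x, ‖f t - f x‖ ≤ c * ‖g t - g x‖) :
    ‖f'‖ ≤ c * ‖g'‖ := by
  have hf_slope := (hasDerivAt_iff_tendsto_slope.mp hf).norm
  have hg_slope := ((hasDerivAt_iff_tendsto_slope.mp hg).norm).const_mul c
  refine le_of_tendsto_of_tendsto hf_slope hg_slope ?_
  filter_upwards [nhdsWithin_le_nhds hbound] with t ht
  rw [slope_def_module, slope_def_module, norm_smul, norm_smul, mul_left_comm]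
  exact mul_le_mul_of_nonneg_left ht (norm_nonneg _)

theorem HasFDerivAt.norm_apply_le_mul_norm_apply_of_eventually_norm_sub_le
    {f : E → F} {g : E → G} {f' : E →L[𝕜] F} {g' : E →L[𝕜] G} {z₀ : E} {c : ℝ}
    (hf : HasFDerivAt f f' z₀) (hg : HasFDerivAt g g' z₀)
    (hbound : ∀ᶠ z in 𝓝 z₀, ‖f z - f z₀‖ ≤ c * ‖g z - g z₀‖) (v : E) :
    ‖f' v‖ ≤ c * ‖g' v‖ := by
  have hline : HasDerivAt (fun t : 𝕜 => z₀ + t • v) v 0 := by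
    simpa using ((hasDerivAt_id (0 : 𝕜)).smul_const v).const_add z₀
  have hline_tendsto : Tendsto (fun t : 𝕜 => z₀ + t • v) (𝓝 0) (𝓝 z₀) := by
    simpa using hline.continuousAt.tendsto
  refine (hf.comp_hasDerivAt_of_eq 0 hline (by simp)).norm_le_mul_norm_of_eventually_norm_sub_le
    (hg.comp_hasDerivAt_of_eq 0 hline (by simp)) ?_
  simpa using hline_tendsto.eventually hbound

end

theorem ContinuousLinearMap.opNorm_le_mul_opNorm_of_norm_apply_le
    {𝕜 E F G : Type*} [NontriviallyNormedField 𝕜]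
    [SeminormedAddCommGroup E] [NormedSpace 𝕜 E] [SeminormedAddCommGroup F] [NormedSpace 𝕜 F]
    [SeminormedAddCommGroup G] [NormedSpace 𝕜 G]
    {A : E →L[𝕜] F} {B : E →L[𝕜] G} {c : ℝ} (hc : 0 ≤ c) (h : ∀ v, ‖A v‖ ≤ c * ‖B v‖) :
    ‖A‖ ≤ c * ‖B‖ :=
  A.opNorm_le_bound (by positivity) fun v =>
    (h v).trans <| by rw [mul_assoc]; exact mul_le_mul_of_nonneg_left (B.le_opNorm v) hc

/-- If `φ` and `ψ` agree at `z₀` and `‖φ z − ψ z‖ ≤ c ‖ψ z − ψ z₀‖` near `z₀`, then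
their Fréchet derivatives at `z₀` satisfy `‖Dφ(z₀) v − Dψ(z₀) v‖ ≤ c ‖Dψ(z₀) v‖` for
all `v`, and in operator norm `‖Dφ(z₀) − Dψ(z₀)‖ ≤ c ‖Dψ(z₀)‖`. -/
theorem fderiv_difference_bound
    {E F : Type*} [NormedAddCommGroup E] [NormedSpace ℝ E]
    [NormedAddCommGroup F] [NormedSpace ℝ F]
    (z₀ : E) (φ ψ : E → F) (φ' ψ' : E →L[ℝ] F)
    (hφ : HasFDerivAt φ φ' z₀) (hψ : HasFDerivAt ψ ψ' z₀)
    (heq : φ z₀ = ψ z₀)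
    (c : ℝ) (hc : 0 ≤ c)
    (hbound : ∀ᶠ z in nhds z₀, ‖φ z - ψ z‖ ≤ c * ‖ψ z - ψ z₀‖) :
    (∀ v : E, ‖φ' v - ψ' v‖ ≤ c * ‖ψ' v‖) ∧ ‖φ' - ψ'‖ ≤ c * ‖ψ'‖ := by
  have hbound' : ∀ᶠ z in 𝓝 z₀, ‖(φ - ψ) z - (φ - ψ) z₀‖ ≤ c * ‖ψ z - ψ z₀‖ := by
    simpa [heq] using hbound
  have hpointwise : ∀ v, ‖(φ' - ψ') v‖ ≤ c * ‖ψ' v‖ :=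
    (hφ.sub hψ).norm_apply_le_mul_norm_apply_of_eventually_norm_sub_le hψ hbound'
  exact ⟨hpointwise, ContinuousLinearMap.opNorm_le_mul_opNorm_of_norm_apply_le hc hpointwise⟩
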